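/- arXiv:1512.03724 — 5 statements merged into one kernel-verified Lean document; each statement's English description precedes it below -/
import Mathlib

section
/- The derivative of the conjugate Hermite polynomial satisfies d/dx Ĥ_n(x) = (n/x) * (Ĥ_n(x) - Ĥ_{n-1}(x)), equivalently x * Ĥ_n'(x) = n*(Ĥ_n(x) - Ĥ_{n-1}(x)) as polynomials. -/
open Polynomial

/-- The monic probabilists' Hermite polynomials. -/
noncomputable def hermiteP : ℕ → Polynomial ℝ
  | 0 => 1
  | 1 => X
  | (n + 2) => X * hermiteP (n + 1) - C ((n : ℝ) + 1) * hermiteP n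

lemma hermiteP_succ (n : ℕ) :
    hermiteP (n + 2) = X * hermiteP (n + 1) - C ((n : ℝ) + 1) * hermiteP n := by
  rw [hermiteP]

lemma derivative_hermiteP (n : ℕ) :
    derivative (hermiteP (n + 1)) = C ((n : ℝ) + 1) * hermiteP n := by
  induction n using Nat.twoStepInduction with
  | zero => simp [hermiteP]
  | one =>
    rw [show (1 : ℕ) + 1 = 0 + 2 from rfl, hermiteP_succ]
    simp [hermiteP]
    ring
  | more n ih1 ih2 =>
    rw [show n + 2 + 1 = (n + 1) + 2 from rfl, hermiteP_succ (n + 1), derivative_sub,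
      derivative_mul, derivative_mul, derivative_X, derivative_C, ih1, ih2]
    have e : hermiteP (n + 1 + 1) = hermiteP (n + 2) := by norm_num
    rw [e, hermiteP_succ n]
    push_cast
    simp only [map_add, map_one, map_ofNat]
    ring

lemma coeff_hermiteP_of_lt : ∀ {n k : ℕ}, n < k → coeff (hermiteP n) k = 0 := by
  intro n
  induction n using Nat.twoStepInduction with
  | zero => intro k h; rw [hermiteP]; exact coeff_one.trans (by simp; omega)
  | one => intro k h; rw [hermiteP, coeff_X]; simp; omega
  | more n ih1 ih2 =>
    intro k h
    obtain ⟨j, rfl⟩ : ∃ j, k = j + 1 := ⟨k - 1, by omega⟩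
    rw [hermiteP_succ, coeff_sub, coeff_X_mul, coeff_C_mul, ih2 (by omega), ih1 (by omega)]
    ring

lemma coeff_hermiteP_self : ∀ n : ℕ, coeff (hermiteP n) n = 1 := by
  intro n
  induction n using Nat.twoStepInduction with
  | zero => simp [hermiteP]
  | one => simp [hermiteP]
  | more n ih1 ih2 =>
    rw [hermiteP_succ, coeff_sub, show n + 2 = (n + 1) + 1 from rfl, coeff_X_mul, ih2,
      coeff_C_mul, coeff_hermiteP_of_lt (by omega)]
    ring

lemma natDegree_hermiteP (n : ℕ) : (hermiteP n).natDegree = n := by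
  refine le_antisymm (natDegree_le_iff_coeff_eq_zero.mpr fun k hk => coeff_hermiteP_of_lt hk)
    (le_natDegree_of_ne_zero ?_)
  rw [coeff_hermiteP_self]; norm_num

/-- The derivative of the conjugate Hermite polynomial `Ĥ n = reverse (H n)` satisfies
`x Ĥ_n'(x) = n (Ĥ_n(x) - Ĥ_{n-1}(x))` as polynomials. -/
theorem hermite_reverse_derivative (n : ℕ) (hn : 1 ≤ n) :
    X * derivative (hermiteP n).reverse =
      C (n : ℝ) * ((hermiteP n).reverse - (hermiteP (n - 1)).reverse) := by
  obtain ⟨m, rfl⟩ : ∃ m, n = m + 1 := ⟨n - 1, by omega⟩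
  have hd : derivative (hermiteP (m + 1)) = C ((m : ℝ) + 1) * hermiteP m :=
    derivative_hermiteP m
  have hred : m + 1 - 1 = m := rfl
  rw [hred]
  ext k
  rw [coeff_C_mul, coeff_sub]
  cases k with
  | zero =>
    simp [coeff_hermiteP_self, natDegree_hermiteP, leadingCoeff, mul_coeff_zero]
  | succ j =>
    rw [coeff_X_mul, coeff_derivative, coeff_reverse, coeff_reverse,
      natDegree_hermiteP, natDegree_hermiteP]
    rcases lt_trichotomy (j + 1) (m + 1) with h | h | h
    · rw [revAt_le h.le, revAt_le (by omega : j + 1 ≤ m)]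
      have hc := congrArg (fun p => coeff p (m - (j + 1))) hd
      simp only [coeff_derivative, coeff_C_mul] at hc
      have e : m - (j + 1) + 1 = m + 1 - (j + 1) := by omega
      rw [e] at hc
      have hcast : ((m - (j + 1) : ℕ) : ℝ) = (m : ℝ) - (j + 1) := by
        push_cast [Nat.cast_sub (by omega : j + 1 ≤ m)]; ring
      rw [hcast] at hc
      push_cast
      push_cast at hc
      linear_combination -hc
    · obtain rfl : j = m := by omega
      rw [revAt_le h.le, Nat.sub_self, revAt_eq_self_of_lt (Nat.lt_succ_self j),
        coeff_hermiteP_of_lt (Nat.lt_succ_self j)]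
      push_cast
      ring
    · rw [revAt_eq_self_of_lt (by omega), revAt_eq_self_of_lt (by omega),
        coeff_hermiteP_of_lt (by omega), coeff_hermiteP_of_lt (by omega)]
      ring
end

section
/- Every root xi of the monic probabilists' Hermite polynomial H_n satisfies |xi| <= 2*sqrt(n + 1/2). -/
open Polynomial

lemma hermiteP_parity : ∀ (n : ℕ) (x : ℝ),
    (hermiteP n).eval (-x) = (-1) ^ n * (hermiteP n).eval x
  | 0, x => by simp [hermiteP]
  | 1, x => by simp [hermiteP]
  | (n + 2), x => by
    have h1 := hermiteP_parity (n + 1) x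
    have h0 := hermiteP_parity n x
    simp only [hermiteP, eval_sub, eval_mul, eval_X, eval_C, h1, h0]
    ring

lemma hermiteP_grow : ∀ (k : ℕ) (x : ℝ), 0 < x → 4 * (k : ℝ) ≤ x ^ 2 →
    0 < (hermiteP k).eval x ∧
      (x / 2) * (hermiteP k).eval x ≤ (hermiteP (k + 1)).eval x
  | 0, x, hx, _ => by
    simp [hermiteP]
    linarith
  | (k + 1), x, hx, hk => by
    obtain ⟨h1, h2⟩ := hermiteP_grow k x hx (by push_cast at hk ⊢; linarith)
    have hpos : 0 < (hermiteP (k + 1)).eval x := lt_of_lt_of_le (by positivity) h2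
    refine ⟨hpos, ?_⟩
    have heq : (hermiteP (k + 2)).eval x
        = x * (hermiteP (k + 1)).eval x - ((k : ℝ) + 1) * (hermiteP k).eval x := by
      simp [hermiteP]
    rw [heq]
    -- from h2 : (x/2) * H_k ≤ H_{k+1}, so H_k ≤ (2/x) * H_{k+1}
    have hk' : (hermiteP k).eval x ≤ (2 / x) * (hermiteP (k + 1)).eval x := by
      rw [div_mul_eq_mul_div, le_div_iff₀ hx]
      nlinarith
    have hc : ((k : ℝ) + 1) * (hermiteP k).eval x
        ≤ ((k : ℝ) + 1) * ((2 / x) * (hermiteP (k + 1)).eval x) := by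
      apply mul_le_mul_of_nonneg_left hk' (by positivity)
    have hx2 : 4 * ((k : ℝ) + 1) ≤ x ^ 2 := by push_cast at hk; linarith
    have : ((k : ℝ) + 1) * ((2 / x) * (hermiteP (k + 1)).eval x)
        ≤ (x / 2) * (hermiteP (k + 1)).eval x := by
      rw [← mul_assoc]
      apply mul_le_mul_of_nonneg_right _ hpos.le
      have hrw : ((k : ℝ) + 1) * (2 / x) = (2 * ((k : ℝ) + 1)) / x := by ring
      rw [hrw, div_le_div_iff₀ hx (by norm_num : (0:ℝ) < 2)]
      nlinarith
    linarith

/-- Every root `ξ` of the monic probabilists' Hermite polynomial `H n`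
satisfies `|ξ| ≤ 2 √(n + 1/2)`. -/
theorem hermite_root_bound (n : ℕ) (x : ℝ) (hx : (hermiteP n).eval x = 0) :
    |x| ≤ 2 * Real.sqrt ((n : ℝ) + 1 / 2) := by
  by_contra hgt
  push_neg at hgt
  set c := 2 * Real.sqrt ((n : ℝ) + 1 / 2) with hc
  have hc0 : 0 ≤ c := by positivity
  have habs : (hermiteP n).eval |x| = 0 := by
    rcases abs_choice x with h | h
    · rw [h]; exact hx
    · rw [h, hermiteP_parity, hx, mul_zero]
  have hxpos : 0 < |x| := lt_of_le_of_lt hc0 hgt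
  have hsq : c ^ 2 < |x| ^ 2 := by
    apply pow_lt_pow_left₀ hgt hc0
    norm_num
  have hcsq : c ^ 2 = 4 * ((n : ℝ) + 1 / 2) := by
    rw [hc, mul_pow, Real.sq_sqrt (by positivity)]
    ring
  cases n with
  | zero => simp [hermiteP] at habs
  | succ k =>
    have := (hermiteP_grow (k + 1) |x| hxpos (by push_cast [hcsq] at hsq ⊢; linarith)).1
    linarith [habs ▸ this]
end

section
/- For every n >= 1, the conjugate Hermite polynomial Ĥ_n(x) = x^n H_n(1/x) is strictly positive for all x in the interval [-1/(3*sqrt(n)), 1/(3*sqrt(n))]. -/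
open Polynomial

lemma hermiteP_monic_deg : ∀ n, (hermiteP n).Monic ∧ (hermiteP n).natDegree = n := by
  intro n
  induction n using Nat.strong_induction_on with
  | _ n ih =>
    match n with
    | 0 => exact ⟨monic_one, natDegree_one⟩
    | 1 => exact ⟨monic_X, natDegree_X⟩
    | (n+2) =>
      obtain ⟨h1, d1⟩ := ih (n+1) (by omega)
      obtain ⟨h0, d0⟩ := ih n (by omega)
      have hm : (X * hermiteP (n+1)).Monic := monic_X.mul h1
      have hd : (X * hermiteP (n+1)).natDegree = n + 2 := by
        rw [natDegree_X_mul h1.ne_zero, d1]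
      have hlt : (C ((n : ℝ) + 1) * hermiteP n).natDegree < (X * hermiteP (n+1)).natDegree := by
        have := natDegree_C_mul_le ((n : ℝ) + 1) (hermiteP n)
        omega
      have hdeg := degree_lt_degree hlt
      show (X * hermiteP (n+1) - C ((n : ℝ) + 1) * hermiteP n).Monic ∧ _
      refine ⟨hm.sub_of_left hdeg, ?_⟩
      rw [show hermiteP (n+2) = X * hermiteP (n+1) - C ((n : ℝ) + 1) * hermiteP n from rfl,
        natDegree_sub_eq_left_of_natDegree_lt hlt, hd]

lemma hermiteP_eval_neg : ∀ n (y : ℝ),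
    (hermiteP n).eval (-y) = (-1 : ℝ) ^ n * (hermiteP n).eval y := by
  intro n
  induction n using Nat.strong_induction_on with
  | _ n ih =>
    match n with
    | 0 => intro y; simp [hermiteP]
    | 1 => intro y; simp [hermiteP]
    | (n+2) =>
      intro y
      have e1 := ih (n+1) (by omega) y
      have e0 := ih n (by omega) y
      show (X * hermiteP (n+1) - C ((n : ℝ) + 1) * hermiteP n).eval (-y) =
        (-1:ℝ)^(n+2) * (X * hermiteP (n+1) - C ((n : ℝ) + 1) * hermiteP n).eval y
      simp only [eval_sub, eval_mul, eval_X, eval_C, e1, e0]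
      ring

lemma hermiteP_pos : ∀ (n : ℕ) (y : ℝ), 0 < y → 4 * (n : ℝ) ≤ y ^ 2 →
    0 < (hermiteP n).eval y ∧ y / 2 * (hermiteP n).eval y ≤ (hermiteP (n+1)).eval y := by
  intro n
  induction n with
  | zero =>
    intro y hy _
    constructor
    · simp [hermiteP]
    · show y / 2 * (hermiteP 0).eval y ≤ (hermiteP 1).eval y
      simp [hermiteP]; linarith
  | succ n ih =>
    intro y hy h4
    have h4' : 4 * (n:ℝ) ≤ y ^ 2 := by push_cast at h4 ⊢; linarith
    obtain ⟨hp, hr⟩ := ih y hy h4'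
    have hp1 : 0 < (hermiteP (n+1)).eval y := lt_of_lt_of_le (by positivity) hr
    refine ⟨hp1, ?_⟩
    show y / 2 * (hermiteP (n+1)).eval y ≤
      (X * hermiteP (n+1) - C ((n : ℝ) + 1) * hermiteP n).eval y
    simp only [eval_sub, eval_mul, eval_X, eval_C]
    -- eval y (hermiteP n) ≤ 2/y * eval y (hermiteP (n+1))
    have hle : (hermiteP n).eval y ≤ 2 / y * (hermiteP (n+1)).eval y := by
      rw [div_mul_eq_mul_div, le_div_iff₀ hy]
      calc (hermiteP n).eval y * y = 2 * (y / 2 * (hermiteP n).eval y) := by ring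
        _ ≤ 2 * (hermiteP (n+1)).eval y := by linarith
    have key : ((n:ℝ) + 1) * (hermiteP n).eval y ≤ y / 2 * (hermiteP (n+1)).eval y := by
      have hn1 : (0:ℝ) < (n:ℝ) + 1 := by positivity
      calc ((n:ℝ) + 1) * (hermiteP n).eval y
          ≤ ((n:ℝ) + 1) * (2 / y * (hermiteP (n+1)).eval y) := by
            exact mul_le_mul_of_nonneg_left hle hn1.le
        _ = ((n:ℝ) + 1) * (2 / y) * (hermiteP (n+1)).eval y := by ring
        _ ≤ y / 2 * (hermiteP (n+1)).eval y := by
            apply mul_le_mul_of_nonneg_right _ hp1.le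
            have h42 : 4 * ((n:ℝ) + 1) ≤ y ^ 2 := by push_cast at h4; linarith
            rw [mul_div_assoc', div_le_div_iff₀ hy (by norm_num : (0:ℝ) < 2)]
            nlinarith
    linarith

lemma hermiteP_reverse_eval (n : ℕ) (x : ℝ) (hx : x ≠ 0) :
    (hermiteP n).reverse.eval x = x ^ n * (hermiteP n).eval x⁻¹ := by
  have hinv : x⁻¹ ≠ 0 := inv_ne_zero hx
  letI : Invertible (x⁻¹) := invertibleOfNonzero hinv
  have h := eval₂_reverse_mul_pow (RingHom.id ℝ) (x⁻¹) (hermiteP n)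
  have hdeg := (hermiteP_monic_deg n).2
  have hid : ∀ (p : ℝ[X]) (t : ℝ), eval₂ (RingHom.id ℝ) t p = p.eval t := fun _ _ => rfl
  rw [invOf_eq_inv x⁻¹, inv_inv, hid, hid, hdeg] at h
  have hxn : x ^ n ≠ 0 := pow_ne_zero _ hx
  rw [← h, inv_pow]
  field_simp


/-- For `n ≥ 1` the conjugate Hermite polynomial `Ĥ n = reverse (H n)` is strictly
positive on the interval `[-1/(3√n), 1/(3√n)]`. -/
theorem hermite_reverse_pos (n : ℕ) (hn : 1 ≤ n) (x : ℝ)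
    (hx : x ∈ Set.Icc (-(1 / (3 * Real.sqrt n))) (1 / (3 * Real.sqrt n))) :
    0 < (hermiteP n).reverse.eval x := by
  obtain ⟨hx1, hx2⟩ := hx
  have hsn : 0 < Real.sqrt n := Real.sqrt_pos.mpr (by exact_mod_cast hn)
  have key : ∀ z : ℝ, 0 < z → z ≤ 1 / (3 * Real.sqrt n) →
      0 < (hermiteP n).reverse.eval z := by
    intro z hz hzle
    have hy : 3 * Real.sqrt n ≤ z⁻¹ := by
      rw [one_div] at hzle
      have := inv_anti₀ hz hzle
      rwa [inv_inv] at this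
    have hypos : 0 < z⁻¹ := lt_of_lt_of_le (by positivity) hy
    have hy2 : 4 * (n : ℝ) ≤ (z⁻¹) ^ 2 := by
      have h9 : 9 * (n:ℝ) = (3 * Real.sqrt n) ^ 2 := by
        rw [mul_pow, Real.sq_sqrt (by positivity : (0:ℝ) ≤ n)]; ring
      nlinarith [Real.sqrt_nonneg (n:ℝ)]
    have hpos := (hermiteP_pos n z⁻¹ hypos hy2).1
    rw [hermiteP_reverse_eval n z hz.ne']
    positivity
  rcases lt_trichotomy x 0 with hneg | rfl | hpos
  · have hnx : 0 < -x := by linarith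
    have : (hermiteP n).reverse.eval x = (hermiteP n).reverse.eval (-x) := by
      rw [hermiteP_reverse_eval n x hneg.ne, hermiteP_reverse_eval n (-x) hnx.ne',
        show (-x)⁻¹ = -(x⁻¹) by rw [inv_neg], hermiteP_eval_neg n x⁻¹]
      rw [neg_pow]
      rcases Nat.even_or_odd n with he | ho
      · rw [he.neg_one_pow]; ring
      · rw [ho.neg_one_pow]; ring
    rw [this]
    exact key (-x) hnx (by linarith)
  · have : (hermiteP n).reverse.eval 0 = 1 := by
      rw [← Polynomial.coeff_zero_eq_eval_zero, Polynomial.coeff_zero_reverse,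
        (hermiteP_monic_deg n).1.leadingCoeff]
    rw [this]; norm_num
  · exact key x hpos hx2
end

section
/- The sequence s_k defined by s_0 = 0 and the recursion s_k = sum_{j=1}^k (s_{k-j} C_{j-1} + C_{k-j}(s_{j-1} - j C_{j-1})) for k >= 1, where C_m are the Catalan numbers, satisfies s_k = -(2^{2k-1} - binomial(2k-1, k)) for all k >= 1. -/
open Finset

lemma cb_rec (n : ℕ) :
    (((n+2).centralBinom : ℤ)) = 4 * ((n+1).centralBinom : ℤ) - 2 * catalan (n+1) := by
  have h1 := Nat.succ_mul_centralBinom_succ (n+1)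
  have h2 := succ_mul_catalan_eq_centralBinom (n+1)
  have hne : ((n:ℤ)+2) ≠ 0 := by positivity
  have h1' : ((n:ℤ)+2) * ((n+2).centralBinom : ℤ)
      = 2 * (2*(n+1)+1) * ((n+1).centralBinom : ℤ) := by exact_mod_cast congrArg (Nat.cast (R := ℤ)) h1
  have h2' : ((n:ℤ)+2) * (catalan (n+1) : ℤ) = ((n+1).centralBinom : ℤ) := by
    exact_mod_cast congrArg (Nat.cast (R := ℤ)) h2
  apply mul_left_cancel₀ hne
  linear_combination h1' + 2 * h2'

lemma key (n : ℕ) :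
    2 * ∑ i ∈ Finset.range (n+1), (4:ℤ)^i * catalan (n - i)
      = 4^(n+1) - ((n+1).centralBinom : ℤ) := by
  induction n with
  | zero => simp [Nat.centralBinom]
  | succ n ih =>
    rw [Finset.sum_range_succ']
    have hs : ∑ i ∈ Finset.range (n+1), (4:ℤ)^(i+1) * catalan (n+1 - (i+1))
        = 4 * ∑ i ∈ Finset.range (n+1), (4:ℤ)^i * catalan (n-i) := by
      rw [Finset.mul_sum]
      refine Finset.sum_congr rfl fun i _ => ?_
      rw [Nat.succ_sub_succ]; ring
    rw [hs]
    have := cb_rec n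
    push_cast
    linear_combination 4 * ih + this

/-- The sequence `s` defined by `s 0 = 0` and the recursion
`s k = ∑_{j=1}^k (s_{k-j} C_{j-1} + C_{k-j} (s_{j-1} - j C_{j-1}))` for `k ≥ 1`
satisfies `s k = -(2^(2k-1) - binom(2k-1, k))` for all `k ≥ 1`. -/
theorem second_coeff_recursion (s : ℕ → ℤ) (h0 : s 0 = 0)
    (hrec : ∀ k : ℕ, 1 ≤ k →
      s k = ∑ j ∈ Finset.Icc 1 k,
        (s (k - j) * catalan (j - 1) +
          (catalan (k - j) : ℤ) * (s (j - 1) - (j : ℤ) * catalan (j - 1)))) :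
    ∀ k : ℕ, 1 ≤ k → s k = -((2 : ℤ) ^ (2 * k - 1) - ((2 * k - 1).choose k : ℤ)) := by
  have main : ∀ k : ℕ, 2 * s k = (k.centralBinom : ℤ) - 4^k := by
    intro k
    induction k using Nat.strong_induction_on with
    | _ k ih =>
      match k with
      | 0 => simp [h0, Nat.centralBinom]
      | (m+1) =>
        have hr := hrec (m+1) (by omega)
        rw [← Finset.Ico_add_one_right_eq_Icc, Finset.sum_Ico_eq_sum_range] at hr
        norm_num at hr
        have e1 : (2:ℤ) * s (m+1) = ∑ i ∈ Finset.range (m+1),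
            (((m-i).centralBinom : ℤ) * catalan i - (i.centralBinom : ℤ) * catalan (m-i)
              - (4:ℤ)^(m-i) * catalan i - (4:ℤ)^i * catalan (m-i)) := by
          rw [hr, Finset.mul_sum]
          refine Finset.sum_congr rfl fun i hi => ?_
          have hi' : i < m + 1 := Finset.mem_range.mp hi
          have h1 : m + 1 - (1 + i) = m - i := by omega
          rw [h1]
          have a := ih (m - i) (by omega)
          have b := ih i (by omega)
          have c : ((i:ℤ)+1) * (catalan i : ℤ) = (i.centralBinom : ℤ) := by
            exact_mod_cast congrArg (Nat.cast (R := ℤ)) (succ_mul_catalan_eq_centralBinom i)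
          linear_combination (catalan i : ℤ) * a + (catalan (m-i) : ℤ) * b
            - 2 * (catalan (m-i) : ℤ) * c
        have r1 : ∑ i ∈ Finset.range (m+1), ((m-i).centralBinom : ℤ) * catalan i
            = ∑ i ∈ Finset.range (m+1), (i.centralBinom : ℤ) * catalan (m-i) := by
          rw [← Finset.sum_range_reflect]
          refine Finset.sum_congr rfl fun i hi => ?_
          have hi' : i < m + 1 := Finset.mem_range.mp hi
          have h1 : m + 1 - 1 - i = m - i := by omega
          have h2 : m - (m - i) = i := by omega
          rw [h1, h2]
        have r2 : ∑ i ∈ Finset.range (m+1), (4:ℤ)^(m-i) * catalan i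
            = ∑ i ∈ Finset.range (m+1), (4:ℤ)^i * catalan (m-i) := by
          rw [← Finset.sum_range_reflect]
          refine Finset.sum_congr rfl fun i hi => ?_
          have hi' : i < m + 1 := Finset.mem_range.mp hi
          have h1 : m + 1 - 1 - i = m - i := by omega
          have h2 : m - (m - i) = i := by omega
          rw [h1, h2]
        have expand : (2:ℤ) * s (m+1) = - (2 * ∑ i ∈ Finset.range (m+1), (4:ℤ)^i * catalan (m-i)) := by
          rw [e1]
          simp only [Finset.sum_sub_distrib]
          rw [r1, r2]
          ring
        rw [expand, key m]
        ring
  intro k hk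
  obtain ⟨m, rfl⟩ : ∃ m, k = m + 1 := ⟨k - 1, by omega⟩
  have hm := main (m+1)
  have hcb : (m+1).centralBinom = 2 * (2*m+1).choose (m+1) := by
    unfold Nat.centralBinom
    have h1 : 2 * (m+1) = (2*m+1) + 1 := by ring
    rw [h1, Nat.choose_succ_succ']
    have h2 : (2*m+1).choose m = (2*m+1).choose (m+1) := by
      have := Nat.choose_symm (n := 2*m+1) (k := m+1) (by omega)
      have h3 : 2*m+1 - (m+1) = m := by omega
      rw [h3] at this
      omega
    omega
  have he : 2 * (m+1) - 1 = 2*m+1 := by omega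
  rw [he]
  have h4 : (4:ℤ)^(m+1) = 2 * 2^(2*m+1) := by
    rw [show (4:ℤ) = 2^2 by norm_num, ← pow_mul]
    rw [show 2*(m+1) = (2*m+1)+1 by ring, pow_succ]
    ring
  rw [hcb] at hm
  push_cast at hm
  rw [h4] at hm
  linarith
end

section
/- For k >= 1, 2^{2k-1} - binomial(2k-1,k) = sum_{j=0}^{k-1} C_j * 2^{2(k-j-1)}, where C_j is the j-th Catalan number. -/
lemma central_eq_two_mul (k : ℕ) (hk : 1 ≤ k) :
    (2 * k).choose k = 2 * (2 * k - 1).choose k := by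
  obtain ⟨m, rfl⟩ := Nat.exists_eq_add_of_le hk
  have hsymm : (2 * (1 + m) - 1).choose (1 + m) = (2 * (1 + m) - 1).choose m := by
    have := Nat.choose_symm (show 1 + m ≤ 2 * (1 + m) - 1 by omega)
    rw [show 2 * (1 + m) - 1 - (1 + m) = m by omega] at this
    exact this.symm
  have h := Nat.add_one_mul_choose_eq (2 * (1 + m) - 1) m
  have h2 : 2 * (1 + m) - 1 + 1 = 2 * (1 + m) := by omega
  rw [h2] at h
  -- h : (2*(1+m)) * choose (2*(1+m)-1) m = choose (2*(1+m)) (m+1) * (m+1)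
  have h3 : m + 1 = 1 + m := by omega
  rw [h3] at h
  rw [hsymm]
  have := Nat.eq_of_mul_eq_mul_right (show 0 < 1 + m by omega)
    (show (2 * (1 + m)).choose (1 + m) * (1 + m)
        = 2 * (2 * (1 + m) - 1).choose m * (1 + m) by
      rw [← h]; ring)
  exact this

lemma key_identity (k : ℕ) (hk : 1 ≤ k) :
    4 * (2 * k - 1).choose k = (2 * k + 1).choose (k + 1) + catalan k := by
  apply Nat.eq_of_mul_eq_mul_right (show 0 < k + 1 by omega)
  have hcat : catalan k * (k + 1) = (2 * k).choose k := by
    rw [mul_comm, succ_mul_catalan_eq_centralBinom, Nat.centralBinom]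
  have hsucc : (2 * k + 1) * (2 * k).choose k = (2 * k + 1).choose (k + 1) * (k + 1) :=
    Nat.add_one_mul_choose_eq (2 * k) k
  have hcen := central_eq_two_mul k hk
  calc 4 * (2 * k - 1).choose k * (k + 1)
      = 2 * ((2 * k).choose k) * (k + 1) := by rw [hcen]; ring
    _ = (2 * k + 1) * (2 * k).choose k + (2 * k).choose k := by ring
    _ = (2 * k + 1).choose (k + 1) * (k + 1) + catalan k * (k + 1) := by
        rw [hsucc, hcat]
    _ = ((2 * k + 1).choose (k + 1) + catalan k) * (k + 1) := by ring

lemma choose_le_two_pow' (n k : ℕ) : n.choose k ≤ 2 ^ n := by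
  rcases le_or_gt k n with h | h
  · calc n.choose k ≤ ∑ i ∈ Finset.range (n + 1), n.choose i :=
        Finset.single_le_sum (fun i _ => Nat.zero_le _) (Finset.mem_range.2 (by omega))
      _ = 2 ^ n := Nat.sum_range_choose n
  · rw [Nat.choose_eq_zero_of_lt h]; exact Nat.zero_le _

/-- For `k ≥ 1`, `2^(2k-1) - binom(2k-1, k) = ∑_{j=0}^{k-1} C_j 2^(2(k-j-1))`. -/
theorem walks_count_identity (k : ℕ) (hk : 1 ≤ k) :
    2 ^ (2 * k - 1) - (2 * k - 1).choose k =
      ∑ j ∈ Finset.range k, catalan j * 2 ^ (2 * (k - j - 1)) := by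
  induction k with
  | zero => omega
  | succ k ih =>
    rcases Nat.eq_zero_or_pos k with rfl | hk1
    · simp
    · have ih' := ih hk1
      rw [Finset.sum_range_succ]
      have hsum : ∑ j ∈ Finset.range k, catalan j * 2 ^ (2 * (k + 1 - j - 1))
          = 4 * ∑ j ∈ Finset.range k, catalan j * 2 ^ (2 * (k - j - 1)) := by
        rw [Finset.mul_sum]
        apply Finset.sum_congr rfl
        intro j hj
        rw [Finset.mem_range] at hj
        have : 2 * (k + 1 - j - 1) = 2 * (k - j - 1) + 2 := by omega
        rw [this, pow_add]
        ring
      rw [hsum, ← ih']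
      have hlast : 2 * (k + 1 - k - 1) = 0 := by omega
      rw [hlast]
      have hkey := key_identity k hk1
      have hle := choose_le_two_pow' (2 * k - 1) k
      have h1 : 2 * (k + 1) - 1 = 2 * k + 1 := by omega
      rw [h1]
      have hpow : 2 ^ (2 * k + 1) = 4 * 2 ^ (2 * k - 1) := by
        rw [show 2 * k + 1 = (2 * k - 1) + 2 by omega, pow_add]; ring
      have hle2 : (2 * k + 1).choose (k + 1) ≤ 2 ^ (2 * k + 1) := choose_le_two_pow' _ _
      omega
end
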